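/- arXiv:1611.05253 — 9 statements merged into one kernel-verified Lean document; each statement's English description precedes it below -/
import Mathlib

section
/- Prager–Synge theorem: if u ∈ V is the exact solution, û ∈ V is any kinematically admissible field, and σ̂ ∈ E is any statically admissible field, then the squared constitutive relation error decomposes as e_CRE(û, σ̂)² = ‖σ̂ − A u‖² + ‖A(û − u)‖². -/
open scoped RealInnerProductSpace

/-- Prager–Synge theorem: if `u` is the exact solution, `uh` is any kinematically
admissible field and `σh` any statically admissible field, then
`e_CRE(uh, σh)² = ‖σh − A u‖² + ‖A (uh − u)‖²`. -/
theorem prager_synge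
    {V E : Type*} [AddCommGroup V] [Module ℝ V]
    [NormedAddCommGroup E] [InnerProductSpace ℝ E]
    (A : V →ₗ[ℝ] E) (f : V →ₗ[ℝ] ℝ) (u uh : V) (σh : E)
    (hu : ∀ v : V, ⟪A u, A v⟫ = f v)
    (hσ : ∀ v : V, ⟪σh, A v⟫ = f v) :
    ‖σh - A uh‖ ^ 2 = ‖σh - A u‖ ^ 2 + ‖A (uh - u)‖ ^ 2 := by
  have hkey : σh - A uh = (σh - A u) - A (uh - u) := by
    simp [map_sub]
  have horth : ⟪σh - A u, A (uh - u)⟫ = 0 := by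
    rw [inner_sub_left, hu, hσ]; ring
  rw [hkey, norm_sub_sq_real, horth]
  ring
end

section
/- Global error bound by the constitutive relation error: if u ∈ V is the exact solution, û ∈ V is any kinematically admissible field (e.g., a finite element solution), and σ̂ ∈ E is any statically admissible field, then the energy norm of the error is bounded by the CRE: ‖A(u − û)‖ ≤ e_CRE(û, σ̂). -/
open scoped RealInnerProductSpace

/-- Global error bound by the constitutive relation error:
`‖A (u − uh)‖ ≤ e_CRE(uh, σh)`. -/
theorem cre_global_bound
    {V E : Type*} [AddCommGroup V] [Module ℝ V]
    [NormedAddCommGroup E] [InnerProductSpace ℝ E]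
    (A : V →ₗ[ℝ] E) (f : V →ₗ[ℝ] ℝ) (u uh : V) (σh : E)
    (hu : ∀ v : V, ⟪A u, A v⟫ = f v)
    (hσ : ∀ v : V, ⟪σh, A v⟫ = f v) :
    ‖A (u - uh)‖ ≤ ‖σh - A uh‖ := by
  have key : ‖A (u - uh)‖ ^ 2 = ⟪σh - A uh, A (u - uh)⟫ := by
    rw [← real_inner_self_eq_norm_sq]
    have h1 : ⟪A u, A (u - uh)⟫ = ⟪σh, A (u - uh)⟫ := by
      rw [hu, hσ]
    calc ⟪A (u - uh), A (u - uh)⟫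
        = ⟪A u, A (u - uh)⟫ - ⟪A uh, A (u - uh)⟫ := by
          rw [map_sub, inner_sub_left]
      _ = ⟪σh, A (u - uh)⟫ - ⟪A uh, A (u - uh)⟫ := by rw [h1]
      _ = ⟪σh - A uh, A (u - uh)⟫ := by rw [inner_sub_left]
  have hcs := real_inner_le_norm (σh - A uh) (A (u - uh))
  nlinarith [norm_nonneg (A (u - uh)), norm_nonneg (σh - A uh)]
end

section
/- Computable two-sided bounds with parameter κ (symmetric case): under the Galerkin conditions, for every κ > 0 and for each sign, ±(Q(u) − Q(u_h)) ≤ ¼ ‖κ(σ̂ − A u_h) ± κ⁻¹(τ̂ − A ũ_h)‖², where σ̂ is statically admissible for the primal problem and τ̂ is statically admissible for the adjoint problem. -/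
open scoped RealInnerProductSpace

private lemma pyth_le {E : Type*} [NormedAddCommGroup E] [InnerProductSpace ℝ E]
    (x y : E) (h : ⟪x - y, y⟫ = 0) : ‖y‖ ^ 2 ≤ ‖x‖ ^ 2 := by
  have hx : x = y + (x - y) := by abel
  have := norm_add_sq_real y (x - y)
  rw [← hx] at this
  have h' : ⟪y, x - y⟫ = 0 := by rw [real_inner_comm]; exact h
  nlinarith [sq_nonneg ‖x - y‖]

private lemma inner_le_quarter {E : Type*} [NormedAddCommGroup E] [InnerProductSpace ℝ E]
    (e et : E) (κ : ℝ) (hκ : 0 < κ) :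
    ⟪e, et⟫ ≤ (1/4) * ‖κ • e + κ⁻¹ • et‖ ^ 2 ∧
    -⟪e, et⟫ ≤ (1/4) * ‖κ • e - κ⁻¹ • et‖ ^ 2 := by
  have hκ' : κ * κ⁻¹ = 1 := mul_inv_cancel₀ hκ.ne'
  have hadd := norm_add_sq_real (κ • e) (κ⁻¹ • et)
  have hsub := norm_sub_sq_real (κ • e) (κ⁻¹ • et)
  have hin : ⟪κ • e, κ⁻¹ • et⟫ = (κ * κ⁻¹) * ⟪e, et⟫ := by
    rw [real_inner_smul_left, real_inner_smul_right]; ring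
  rw [hin, hκ', one_mul] at hadd hsub
  constructor <;> nlinarith [sq_nonneg ‖κ • e - κ⁻¹ • et‖, sq_nonneg ‖κ • e + κ⁻¹ • et‖]

/-- Computable two-sided bounds with parameter `κ` (symmetric case):
`±(Q(u) − Q(u_h)) ≤ ¼ ‖κ(σ̂ − A u_h) ± κ⁻¹(τ̂ − A ũ_h)‖²`. -/
theorem kappa_bounds
    {V E : Type*} [AddCommGroup V] [Module ℝ V]
    [NormedAddCommGroup E] [InnerProductSpace ℝ E]
    (A : V →ₗ[ℝ] E) (f Q : V →ₗ[ℝ] ℝ)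
    (Vh : Submodule ℝ V) (u ut uh uth : V) (σh τh : E)
    (huh : uh ∈ Vh) (huth : uth ∈ Vh)
    (hu : ∀ v : V, ⟪A u, A v⟫ = f v)
    (hut : ∀ v : V, ⟪A v, A ut⟫ = Q v)
    (huhG : ∀ v ∈ Vh, ⟪A uh, A v⟫ = f v)
    (huthG : ∀ v ∈ Vh, ⟪A v, A uth⟫ = Q v)
    (hσ : ∀ v : V, ⟪σh, A v⟫ = f v)
    (hτ : ∀ v : V, ⟪τh, A v⟫ = Q v) :
    ∀ κ : ℝ, 0 < κ →
      (Q u - Q uh ≤ (1/4) * ‖κ • (σh - A uh) + κ⁻¹ • (τh - A uth)‖ ^ 2) ∧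
      (-(Q u - Q uh) ≤ (1/4) * ‖κ • (σh - A uh) - κ⁻¹ • (τh - A uth)‖ ^ 2) := by
  intro κ hκ
  set e : E := A u - A uh with he
  set et : E := A ut - A uth with het
  -- error representation: Q u - Q uh = ⟪e, et⟫
  have hQ : Q u - Q uh = ⟪e, et⟫ := by
    have h1 : ⟪e, A uth⟫ = 0 := by
      rw [he, inner_sub_left, hu uth, huhG uth huth, sub_self]
    have h2 : ⟪e, A ut⟫ = Q u - Q uh := by
      rw [he, inner_sub_left, hut u, hut uh]
    rw [het, inner_sub_right, h1, h2, sub_zero]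
  -- orthogonality of admissible error fields to range of A
  have horth1 : ∀ v : V, ⟪σh - A u, A v⟫ = 0 := by
    intro v; rw [inner_sub_left, hσ v, hu v, sub_self]
  have horth2 : ∀ v : V, ⟪τh - A ut, A v⟫ = 0 := by
    intro v
    rw [inner_sub_left, hτ v, real_inner_comm (A v) (A ut), hut v, sub_self]
  -- the Pythagoras comparison for both signs
  have hcomp : ∀ c : ℝ,
      ‖κ • e + (c * κ⁻¹) • et‖ ^ 2 ≤ ‖κ • (σh - A uh) + (c * κ⁻¹) • (τh - A uth)‖ ^ 2 := by
    intro c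
    apply pyth_le
    have hx : κ • (σh - A uh) + (c * κ⁻¹) • (τh - A uth) - (κ • e + (c * κ⁻¹) • et)
        = κ • (σh - A u) + (c * κ⁻¹) • (τh - A ut) := by
      rw [he, het]
      module
    rw [hx]
    have hy : κ • e + (c * κ⁻¹) • et = A (κ • (u - uh) + (c * κ⁻¹) • (ut - uth)) := by
      rw [he, het]
      simp [map_add, map_smul, map_sub]
    rw [hy, inner_add_left, real_inner_smul_left, real_inner_smul_left,
      horth1, horth2]
    ring
  have hmain := inner_le_quarter e et κ hκ
  have hc1 := hcomp 1
  have hc2 := hcomp (-1)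
  simp only [one_mul, neg_mul, neg_smul, ← sub_eq_add_neg] at hc1 hc2
  rw [hQ]
  constructor
  · linarith [hmain.1]
  · linarith [hmain.2]
end

section
/- CRE-based strict goal-oriented bounds (symmetric case): under the Galerkin conditions, with σ̂ statically admissible for the primal problem and τ̂ statically admissible for the adjoint problem, the error in the quantity of interest satisfies |Q(u) − Q(u_h) − ½⟪σ̂ − A u_h, τ̂ − A ũ_h⟫| ≤ ½ ‖σ̂ − A u_h‖ · ‖τ̂ − A ũ_h‖, i.e. it is bounded by half the product of the primal and adjoint constitutive relation errors. -/
open scoped RealInnerProductSpace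

/-- CRE-based strict goal-oriented bounds (symmetric case):
`|Q(u) − Q(u_h) − ½⟪σ̂ − A u_h, τ̂ − A ũ_h⟫| ≤ ½ ‖σ̂ − A u_h‖·‖τ̂ − A ũ_h‖`. -/
theorem cre_goal_bounds
    {V E : Type*} [AddCommGroup V] [Module ℝ V]
    [NormedAddCommGroup E] [InnerProductSpace ℝ E]
    (A : V →ₗ[ℝ] E) (f Q : V →ₗ[ℝ] ℝ)
    (Vh : Submodule ℝ V) (u ut uh uth : V) (σh τh : E)
    (huh : uh ∈ Vh) (huth : uth ∈ Vh)
    (hu : ∀ v : V, ⟪A u, A v⟫ = f v)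
    (hut : ∀ v : V, ⟪A v, A ut⟫ = Q v)
    (huhG : ∀ v ∈ Vh, ⟪A uh, A v⟫ = f v)
    (huthG : ∀ v ∈ Vh, ⟪A v, A uth⟫ = Q v)
    (hσ : ∀ v : V, ⟪σh, A v⟫ = f v)
    (hτ : ∀ v : V, ⟪τh, A v⟫ = Q v) :
    |Q u - Q uh - (1/2) * ⟪σh - A uh, τh - A uth⟫|
      ≤ (1/2) * ‖σh - A uh‖ * ‖τh - A uth‖ := by
  set a : E := A u - A uh with ha
  set b : E := σh - A u with hb
  set c : E := A ut - A uth with hc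
  set d : E := τh - A ut with hd
  -- b is orthogonal to the range of A
  have hbv : ∀ v : V, ⟪b, A v⟫ = 0 := by
    intro v
    rw [hb, inner_sub_left, hσ, hu, sub_self]
  -- d is orthogonal to the range of A
  have hdv : ∀ v : V, ⟪d, A v⟫ = 0 := by
    intro v
    rw [hd, inner_sub_left, hτ, real_inner_comm, hut, sub_self]
  -- a is in the range of A
  have haA : a = A (u - uh) := by rw [ha, map_sub]
  have hcA : c = A (ut - uth) := by rw [hc, map_sub]
  have hab : ⟪a, b⟫ = 0 := by rw [real_inner_comm, haA, hbv]
  have hcd : ⟪c, d⟫ = 0 := by rw [real_inner_comm, hcA, hdv]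
  have had : ⟪a, d⟫ = 0 := by rw [real_inner_comm, haA, hdv]
  have hbc : ⟪b, c⟫ = 0 := by rw [hcA, hbv]
  -- Q u - Q uh = ⟪a, c⟫
  have hba : ⟪b, a⟫ = 0 := by rw [haA]; exact hbv _
  have hdc : ⟪d, c⟫ = 0 := by rw [hcA]; exact hdv _
  have hQ : Q u - Q uh = ⟪a, c⟫ := by
    have h1 : ⟪a, A uth⟫ = 0 := by
      rw [ha, inner_sub_left, hu, huhG uth huth, sub_self]
    have h2 : ⟪a, A ut⟫ = Q u - Q uh := by
      rw [haA, hut, map_sub]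
    rw [hc, inner_sub_right, h1, h2, sub_zero]
  have hst : σh - A uh = a + b := by rw [ha, hb]; abel
  have htt : τh - A uth = c + d := by rw [hc, hd]; abel
  have hip : ⟪σh - A uh, τh - A uth⟫ = ⟪a, c⟫ + ⟪b, d⟫ := by
    rw [hst, htt, inner_add_left, inner_add_right, inner_add_right,
      had, hbc, add_zero, zero_add]
  have hns : ‖σh - A uh‖ ^ 2 = ‖a‖ ^ 2 + ‖b‖ ^ 2 := by
    rw [hst, ← real_inner_self_eq_norm_sq, inner_add_add_self, hab,
      real_inner_self_eq_norm_sq, real_inner_self_eq_norm_sq,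
      hba]; ring
  have hnt : ‖τh - A uth‖ ^ 2 = ‖c‖ ^ 2 + ‖d‖ ^ 2 := by
    rw [htt, ← real_inner_self_eq_norm_sq, inner_add_add_self, hcd,
      real_inner_self_eq_norm_sq, real_inner_self_eq_norm_sq,
      hdc]; ring
  have hac : |⟪a, c⟫| ≤ ‖a‖ * ‖c‖ := abs_real_inner_le_norm a c
  have hbd : |⟪b, d⟫| ≤ ‖b‖ * ‖d‖ := abs_real_inner_le_norm b d
  have key : |Q u - Q uh - (1/2) * ⟪σh - A uh, τh - A uth⟫|
      ≤ (1/2) * (‖a‖ * ‖c‖ + ‖b‖ * ‖d‖) := by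
    rw [hQ, hip]
    have : ⟪a, c⟫ - 1/2 * (⟪a, c⟫ + ⟪b, d⟫) = (1/2) * (⟪a, c⟫ - ⟪b, d⟫) := by ring
    rw [this, abs_mul, abs_of_pos (by norm_num : (0:ℝ) < 1/2)]
    have := abs_sub (⟪a, c⟫) (⟪b, d⟫)
    nlinarith [abs_nonneg (⟪a, c⟫ - ⟪b, d⟫)]
  refine key.trans ?_
  have hprod : (‖σh - A uh‖ * ‖τh - A uth‖) ^ 2
      = (‖a‖ ^ 2 + ‖b‖ ^ 2) * (‖c‖ ^ 2 + ‖d‖ ^ 2) := by rw [mul_pow, hns, hnt]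
  have h2 : (‖a‖ * ‖c‖ + ‖b‖ * ‖d‖) ≤ ‖σh - A uh‖ * ‖τh - A uth‖ := by
    nlinarith [hprod, sq_nonneg (‖a‖ * ‖d‖ - ‖b‖ * ‖c‖),
      mul_nonneg (norm_nonneg (σh - A uh)) (norm_nonneg (τh - A uth)),
      mul_nonneg (norm_nonneg a) (norm_nonneg c),
      mul_nonneg (norm_nonneg b) (norm_nonneg d)]
  linarith
end

section
/- Quantity-error identity via the functional Π (non-symmetric case): under the stated solution and Galerkin conditions, for every κ > 0 and each sign, ±(Q(u) − Q(u_h)) = Π_κ^±(κ(u − u_h)). -/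
/-- Quantity-error identity via the functional `Π` (non-symmetric case):
for every `κ > 0` and each sign, `±(Q(u) − Q(u_h)) = Π_κ^±(κ(u − u_h))`. -/
theorem quantity_error_Pi
    {X : Type*} [AddCommGroup X] [Module ℝ X]
    (b : X →ₗ[ℝ] X →ₗ[ℝ] ℝ) (l Q : X →ₗ[ℝ] ℝ)
    (Xh : Submodule ℝ X) (u uh uth : X)
    (huh : uh ∈ Xh) (huth : uth ∈ Xh)
    (hu : ∀ v : X, b u v = l v)
    (huhG : ∀ v ∈ Xh, b uh v = l v)
    (huthG : ∀ v ∈ Xh, b v uth = Q v)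
    (Rp Rd : X → ℝ)
    (hRp : ∀ v, Rp v = l v - b uh v)
    (hRd : ∀ v, Rd v = Q v - b v uth)
    (Pi : ℝ → ℝ → X → ℝ)
    (hPi : ∀ κ s v, Pi κ s v = s * κ⁻¹ * Rd v + b v v - κ * Rp v) :
    ∀ κ : ℝ, 0 < κ → ∀ s : ℝ, s = 1 ∨ s = -1 →
      s * (Q u - Q uh) = Pi κ s (κ • (u - uh)) := by
  intro κ hκ s _
  have hκ0 : κ ≠ 0 := ne_of_gt hκ
  rw [hPi]
  simp only [hRp, hRd, map_smul, map_sub, LinearMap.smul_apply, LinearMap.sub_apply,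
    smul_eq_mul, hu, huhG uth huth]
  field_simp
  ring
end

section
/- Minimizer of the functional Π: if b^S(v,v) ≥ 0 for all v ∈ X and ε_p, ε_d ∈ X solve the residual problems b^S(ε_p, v) = R_p(v) and b^S(ε_d, v) = R_d(v) for all v ∈ X, then for every κ > 0 and each sign, the element y_κ^± = ½(κ ε_p ∓ κ⁻¹ ε_d) minimizes Π_κ^± over X, i.e. Π_κ^±(v) ≥ Π_κ^±(y_κ^±) for all v ∈ X, and moreover Π_κ^±(y_κ^±) = −¼ b^S(κ ε_p ∓ κ⁻¹ ε_d, κ ε_p ∓ κ⁻¹ ε_d). -/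
/-- Minimizer of the functional `Π`: `y_κ^± = ½(κ ε_p ∓ κ⁻¹ ε_d)` minimizes
`Π_κ^±` over `X`, and `Π_κ^±(y_κ^±) = −¼ b^S(κ ε_p ∓ κ⁻¹ ε_d, κ ε_p ∓ κ⁻¹ ε_d)`. -/
theorem Pi_minimizer
    {X : Type*} [AddCommGroup X] [Module ℝ X]
    (b : X →ₗ[ℝ] X →ₗ[ℝ] ℝ) (l Q : X →ₗ[ℝ] ℝ)
    (Xh : Submodule ℝ X) (uh uth : X)
    (huh : uh ∈ Xh) (huth : uth ∈ Xh)
    (huhG : ∀ v ∈ Xh, b uh v = l v)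
    (huthG : ∀ v ∈ Xh, b v uth = Q v)
    (Rp Rd : X → ℝ)
    (hRp : ∀ v, Rp v = l v - b uh v)
    (hRd : ∀ v, Rd v = Q v - b v uth)
    (Pi : ℝ → ℝ → X → ℝ)
    (hPi : ∀ κ s v, Pi κ s v = s * κ⁻¹ * Rd v + b v v - κ * Rp v)
    (bS : X → X → ℝ)
    (hbS : ∀ w v, bS w v = (b w v + b v w) / 2)
    (hpos : ∀ v, bS v v ≥ 0)
    (εp εd : X)
    (hεp : ∀ v, bS εp v = Rp v)
    (hεd : ∀ v, bS εd v = Rd v) :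
    ∀ κ : ℝ, 0 < κ → ∀ s : ℝ, s = 1 ∨ s = -1 →
      (∀ v : X, Pi κ s v ≥ Pi κ s ((1/2 : ℝ) • (κ • εp - (s * κ⁻¹) • εd))) ∧
      Pi κ s ((1/2 : ℝ) • (κ • εp - (s * κ⁻¹) • εd))
        = -(1/4) * bS (κ • εp - (s * κ⁻¹) • εd) (κ • εp - (s * κ⁻¹) • εd) := by
  intro κ hκ s hs
  set w := κ • εp - (s * κ⁻¹) • εd with hw
  have key : ∀ v : X, Pi κ s v
      = bS (v - (1/2:ℝ) • w) (v - (1/2:ℝ) • w) - (1/4) * bS w w := by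
    intro v
    rw [hPi, ← hεd, ← hεp, hbS, hbS, hbS, hbS, hw]
    simp only [map_sub, map_add, map_smul, LinearMap.sub_apply, LinearMap.add_apply,
      LinearMap.smul_apply, smul_eq_mul]
    ring
  have hy : Pi κ s ((1/2:ℝ) • w) = -(1/4) * bS w w := by
    rw [key, sub_self]
    simp [hbS]
  refine ⟨fun v => ?_, hy⟩
  rw [key v, hy]
  have := hpos (v - (1/2:ℝ) • w)
  linarith
end

section
/- Lower bound on the quantity error (non-symmetric case): if b^S(v,v) ≥ 0 for all v ∈ X, u is the exact primal solution, u_h and ũ_h are the Galerkin solutions, and ε_p, ε_d ∈ X solve the residual problems b^S(ε_p, v) = R_p(v) and b^S(ε_d, v) = R_d(v) for all v ∈ X, then for every κ > 0 and each sign, ±(Q(u) − Q(u_h)) ≥ −¼ b^S(κ ε_p ∓ κ⁻¹ ε_d, κ ε_p ∓ κ⁻¹ ε_d). -/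
/-- Lower bound on the quantity error (non-symmetric case):
`±(Q(u) − Q(u_h)) ≥ −¼ b^S(κ ε_p ∓ κ⁻¹ ε_d, κ ε_p ∓ κ⁻¹ ε_d)`. -/
theorem quantity_error_lower_bound
    {X : Type*} [AddCommGroup X] [Module ℝ X]
    (b : X →ₗ[ℝ] X →ₗ[ℝ] ℝ) (l Q : X →ₗ[ℝ] ℝ)
    (Xh : Submodule ℝ X) (u uh uth : X)
    (huh : uh ∈ Xh) (huth : uth ∈ Xh)
    (hu : ∀ v : X, b u v = l v)
    (huhG : ∀ v ∈ Xh, b uh v = l v)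
    (huthG : ∀ v ∈ Xh, b v uth = Q v)
    (Rp Rd : X → ℝ)
    (hRp : ∀ v, Rp v = l v - b uh v)
    (hRd : ∀ v, Rd v = Q v - b v uth)
    (bS : X → X → ℝ)
    (hbS : ∀ w v, bS w v = (b w v + b v w) / 2)
    (hpos : ∀ v, bS v v ≥ 0)
    (εp εd : X)
    (hεp : ∀ v, bS εp v = Rp v)
    (hεd : ∀ v, bS εd v = Rd v) :
    ∀ κ : ℝ, 0 < κ → ∀ s : ℝ, s = 1 ∨ s = -1 →
      s * (Q u - Q uh)
        ≥ -(1/4) * bS (κ • εp - (s * κ⁻¹) • εd) (κ • εp - (s * κ⁻¹) • εd) := by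
  intro κ hκ s hs
  have hκ0 : κ ≠ 0 := ne_of_gt hκ
  have hκt : κ * κ⁻¹ = 1 := mul_inv_cancel₀ hκ0
  have hsq : s * s = 1 := by rcases hs with h | h <;> simp [h]
  set e := u - uh with he
  -- the primal residual is represented by e
  have hRpe : ∀ v, Rp v = b e v := by
    intro v
    rw [hRp, he, map_sub, LinearMap.sub_apply, hu v]
  -- Q u - Q uh = bS εd e
  have hQe : Q u - Q uh = (b εd e + b e εd) / 2 := by
    have h1 := hεd e
    rw [hbS, hRd] at h1
    have h2 : b e uth = 0 := by
      rw [← hRpe uth, hRp, huhG uth huth]; ring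
    have h3 : Q e = Q u - Q uh := by rw [he, map_sub]
    rw [h2, h3] at h1
    linarith
  -- bS εp e = b e e
  have hEp : b εp e + b e εp = 2 * b e e := by
    have h1 := hεp e
    rw [hbS, hRpe] at h1
    linarith
  have hww := hpos (κ • e + (s * κ⁻¹ / 2) • εd - (κ / 2) • εp)
  rw [hbS] at hww
  rw [hbS]
  have hid : s * (Q u - Q uh)
      + (1/4) * ((b (κ • εp - (s * κ⁻¹) • εd) (κ • εp - (s * κ⁻¹) • εd)
            + b (κ • εp - (s * κ⁻¹) • εd) (κ • εp - (s * κ⁻¹) • εd)) / 2)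
      = (b (κ • e + (s * κ⁻¹ / 2) • εd - (κ / 2) • εp)
            (κ • e + (s * κ⁻¹ / 2) • εd - (κ / 2) • εp)
          + b (κ • e + (s * κ⁻¹ / 2) • εd - (κ / 2) • εp)
            (κ • e + (s * κ⁻¹ / 2) • εd - (κ / 2) • εp)) / 2 := by
    simp only [map_add, map_sub, map_smul, LinearMap.add_apply, LinearMap.sub_apply,
      LinearMap.smul_apply, smul_eq_mul]
    linear_combination s * hQe + (κ^2/2) * hEp
      - (s/2) * (b e εd + b εd e) * hκt
  linarith
end

section
/- Complementary-energy bound for the residual problems: suppose the symmetric part of b is induced by a linear map Λ : X → E into a real inner product space E, i.e. b^S(w, v) = ⟪Λ w, Λ v⟫ for all w, v ∈ X. If ε_p, ε_d ∈ X solve b^S(ε_p, v) = R_p(v) and b^S(ε_d, v) = R_d(v) for all v ∈ X, and σ̂_p, σ̂_d ∈ E are equilibrated residual fields, i.e. ⟪σ̂_p, Λ v⟫ = R_p(v) and ⟪σ̂_d, Λ v⟫ = R_d(v) for all v ∈ X, then for every κ > 0 and each sign, b^S(κ ε_p ∓ κ⁻¹ ε_d, κ ε_p ∓ κ⁻¹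 ε_d) ≤ ‖κ σ̂_p ∓ κ⁻¹ σ̂_d‖². -/
open scoped RealInnerProductSpace

/-- Complementary-energy bound for the residual problems:
`b^S(κ ε_p ∓ κ⁻¹ ε_d, κ ε_p ∓ κ⁻¹ ε_d) ≤ ‖κ σ̂_p ∓ κ⁻¹ σ̂_d‖²`. -/
theorem complementary_energy_bound
    {X E : Type*} [AddCommGroup X] [Module ℝ X]
    [NormedAddCommGroup E] [InnerProductSpace ℝ E]
    (b : X →ₗ[ℝ] X →ₗ[ℝ] ℝ) (l Q : X →ₗ[ℝ] ℝ)
    (Xh : Submodule ℝ X) (uh uth : X)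
    (huh : uh ∈ Xh) (huth : uth ∈ Xh)
    (huhG : ∀ v ∈ Xh, b uh v = l v)
    (huthG : ∀ v ∈ Xh, b v uth = Q v)
    (Rp Rd : X → ℝ)
    (hRp : ∀ v, Rp v = l v - b uh v)
    (hRd : ∀ v, Rd v = Q v - b v uth)
    (bS : X → X → ℝ)
    (hbS : ∀ w v, bS w v = (b w v + b v w) / 2)
    (Λ : X →ₗ[ℝ] E)
    (hΛ : ∀ w v : X, bS w v = ⟪Λ w, Λ v⟫)
    (εp εd : X)
    (hεp : ∀ v, bS εp v = Rp v)
    (hεd : ∀ v, bS εd v = Rd v)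
    (σp σd : E)
    (hσp : ∀ v : X, ⟪σp, Λ v⟫ = Rp v)
    (hσd : ∀ v : X, ⟪σd, Λ v⟫ = Rd v) :
    ∀ κ : ℝ, 0 < κ → ∀ s : ℝ, s = 1 ∨ s = -1 →
      bS (κ • εp - (s * κ⁻¹) • εd) (κ • εp - (s * κ⁻¹) • εd)
        ≤ ‖κ • σp - (s * κ⁻¹) • σd‖ ^ 2 := by
  intro κ hκ s hs
  set c : ℝ := s * κ⁻¹ with hc
  set w : X := κ • εp - c • εd with hw
  set σ : E := κ • σp - c • σd with hσ
  have hΛw : Λ w = κ • Λ εp - c • Λ εd := by simp [hw, map_sub, map_smul]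
  have key : ⟪σ, Λ w⟫ = ⟪Λ w, Λ w⟫ := by
    have h1 : ∀ v : X, ⟪σ, Λ v⟫ = κ * Rp v - c * Rd v := by
      intro v
      simp [hσ, inner_sub_left, real_inner_smul_left, hσp, hσd]
    have h2 : ∀ v : X, ⟪Λ w, Λ v⟫ = κ * Rp v - c * Rd v := by
      intro v
      rw [hΛw, inner_sub_left, real_inner_smul_left, real_inner_smul_left,
        ← hΛ, ← hΛ, hεp, hεd]
    rw [h1, h2]
  have hbww : bS w w = ⟪Λ w, Λ w⟫ := hΛ w w
  have hnn : (0:ℝ) ≤ ‖σ - Λ w‖ ^ 2 := sq_nonneg _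
  have hexp : ‖σ - Λ w‖ ^ 2 = ‖σ‖ ^ 2 - 2 * ⟪σ, Λ w⟫ + ‖Λ w‖ ^ 2 := by
    rw [norm_sub_sq_real]
  have hinn : ⟪Λ w, Λ w⟫ = ‖Λ w‖ ^ 2 := real_inner_self_eq_norm_sq (Λ w)
  rw [hbww, hinn]
  nlinarith [hnn, hexp, key, hinn]
end

section
/- Main strict bounds for quantities of interest with a non-symmetric bilinear form: suppose the symmetric part of b is induced by a linear map Λ : X → E into a real inner product space E, i.e. b^S(w, v) = ⟪Λ w, Λ v⟫ for all w, v ∈ X. If u is the exact primal solution, u_h and ũ_h are the Galerkin solutions, and σ̂_p, σ̂_d ∈ E are equilibrated residual fields, i.e. ⟪σ̂_p, Λ v⟫ = R_p(v) and ⟪σ̂_d, Λ v⟫ = R_d(v) for all v ∈ X, then |Q(u) − Q(u_h) − ½⟪σ̂_p, σ̂_d⟫| ≤ ½ ‖σ̂_p‖ · ‖σ̂_d‖. -/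
open scoped RealInnerProductSpace

/-- Main strict bounds for quantities of interest with a non-symmetric bilinear
form: `|Q(u) − Q(u_h) − ½⟪σ̂_p, σ̂_d⟫| ≤ ½ ‖σ̂_p‖·‖σ̂_d‖`. -/
theorem nonsymmetric_goal_bounds
    {X E : Type*} [AddCommGroup X] [Module ℝ X]
    [NormedAddCommGroup E] [InnerProductSpace ℝ E]
    (b : X →ₗ[ℝ] X →ₗ[ℝ] ℝ) (l Q : X →ₗ[ℝ] ℝ)
    (Xh : Submodule ℝ X) (u uh uth : X)
    (huh : uh ∈ Xh) (huth : uth ∈ Xh)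
    (hu : ∀ v : X, b u v = l v)
    (huhG : ∀ v ∈ Xh, b uh v = l v)
    (huthG : ∀ v ∈ Xh, b v uth = Q v)
    (Rp Rd : X → ℝ)
    (hRp : ∀ v, Rp v = l v - b uh v)
    (hRd : ∀ v, Rd v = Q v - b v uth)
    (bS : X → X → ℝ)
    (hbS : ∀ w v, bS w v = (b w v + b v w) / 2)
    (Λ : X →ₗ[ℝ] E)
    (hΛ : ∀ w v : X, bS w v = ⟪Λ w, Λ v⟫)
    (σp σd : E)
    (hσp : ∀ v : X, ⟪σp, Λ v⟫ = Rp v)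
    (hσd : ∀ v : X, ⟪σd, Λ v⟫ = Rd v) :
    |Q u - Q uh - (1/2) * ⟪σp, σd⟫| ≤ (1/2) * ‖σp‖ * ‖σd‖ := by
  set e := u - uh with he
  have hbe : ∀ v : X, b e v = b u v - b uh v := by
    intro v; simp [he, map_sub]
  -- ⟪σp, Λ e⟫ = ‖Λ e‖²
  have h1 : ⟪σp, Λ e⟫ = ‖Λ e‖ ^ 2 := by
    have hbee : b e e = ‖Λ e‖ ^ 2 := by
      have := hΛ e e
      rw [hbS] at this
      have : b e e = ⟪Λ e, Λ e⟫ := by linarith [this]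
      rw [this, real_inner_self_eq_norm_sq]
    rw [hσp, hRp]
    linarith [hbee, hbe e, hu e]
  -- ⟪σd, Λ e⟫ = Q u - Q uh
  have h2 : ⟪σd, Λ e⟫ = Q u - Q uh := by
    have hbeuth : b e uth = 0 := by
      rw [hbe, hu, huhG uth huth]; ring
    have : Q e = Q u - Q uh := by simp [he, map_sub]
    rw [hσd, hRd, hbeuth, this]; ring
  -- rewrite the target quantity as an inner product
  have key : Q u - Q uh - (1/2) * ⟪σp, σd⟫ = ⟪σd, Λ e - (1/2 : ℝ) • σp⟫ := by
    rw [inner_sub_right, real_inner_smul_right, h2, real_inner_comm σd σp]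
  -- compute ‖Λ e - ½ σp‖
  have hnorm : ‖Λ e - (1/2 : ℝ) • σp‖ = (1/2) * ‖σp‖ := by
    have hsq : ‖Λ e - (1/2 : ℝ) • σp‖ ^ 2 = ((1/2) * ‖σp‖) ^ 2 := by
      rw [norm_sub_sq_real, real_inner_smul_right, norm_smul,
        real_inner_comm, h1]
      simp [norm_smul]
    have h1' : (0:ℝ) ≤ ‖Λ e - (1/2 : ℝ) • σp‖ := norm_nonneg _
    have h2' : (0:ℝ) ≤ (1/2) * ‖σp‖ := by positivity
    nlinarith
  calc |Q u - Q uh - (1/2) * ⟪σp, σd⟫|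
      = |⟪σd, Λ e - (1/2 : ℝ) • σp⟫| := by rw [key]
    _ ≤ ‖σd‖ * ‖Λ e - (1/2 : ℝ) • σp‖ := abs_real_inner_le_norm _ _
    _ = (1/2) * ‖σp‖ * ‖σd‖ := by rw [hnorm]; ring
end
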